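/- Suppose the group G = ⟨⟨a₁,…,a_r⟩⟩ contains no odometer. Then the normalizer N_Ω(G) of G in Ω also contains no odometer. -/

import Mathlib

/-!
An element of `Ω` is an odometer exactly when all its signs `sgn_n`, `n ≥ 1`, equal `-1`: a
`2^n`-cycle is odd, and conversely, writing `γ = (γ₀, γ₁)σ`, the square `γ² = (γ₁γ₀, γ₀γ₁)`
reduces transitivity of `γ` on level `n + 1` to transitivity of `γ₁γ₀` on level `n`, while
`sgn_n(γ₁γ₀) = sgn_{n+1}(γ)`.

If an odometer `γ = (γ₀, γ₁)σ` normalizes `G`, then `γ a₁ γ⁻¹ = (γ₀γ₁⁻¹, γ₁ a_r γ₀⁻¹)σ ∈ G`.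
Sections of an element of the closure are approximated, level by level, by sections of elements
of the self-similar group `⟨a₁, …, a_r⟩`, so `γ₀γ₁⁻¹ ∈ G`; and
`sgn_n(γ₀γ₁⁻¹) = sgn_{n+1}(γ) = -1`, so `γ₀γ₁⁻¹` is an odometer in `G`.
-/

namespace BinTree

/-- Vertices of the infinite rooted binary tree: finite words over `{0,1}`. -/
abbrev Vertex : Type := List Bool

/-- A function on vertices is a tree automorphism function if it preserves lengths
(levels) and prefixes. -/
def IsTreeAutFun (f : Vertex → Vertex) : Prop :=
  (∀ v, (f v).length = v.length) ∧ ∀ v w : Vertex, (f (v ++ w)).take v.length = f v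

/-- `Ω`: the automorphism group of the infinite rooted binary tree, realized as the
subgroup of permutations of the set of vertices preserving the tree structure. -/
def TreeAut : Subgroup (Equiv.Perm Vertex) where
  carrier := {e | IsTreeAutFun ⇑e}
  one_mem' := ⟨fun _ => rfl, fun v w => by
    simpa using List.take_left (l₁ := v) (l₂ := w)⟩
  mul_mem' := by
    rintro a b ha hb
    obtain ⟨ha1, ha2⟩ := ha
    obtain ⟨hb1, hb2⟩ := hb
    refine ⟨fun v => ?_, fun v w => ?_⟩
    · simp [Equiv.Perm.mul_apply, ha1, hb1]
    · have hb' : b (v ++ w) = b v ++ (b (v ++ w)).drop v.length := by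
        conv_lhs => rw [← List.take_append_drop v.length (b (v ++ w)), hb2]
      have hlen : (b v).length = v.length := hb1 v
      calc ((a * b) (v ++ w)).take v.length
          = (a (b v ++ (b (v ++ w)).drop v.length)).take v.length := by
            rw [Equiv.Perm.mul_apply, ← hb']
        _ = a (b v) := by rw [← hlen]; exact ha2 _ _
        _ = (a * b) v := rfl
  inv_mem' := by
    intro a ha
    obtain ⟨ha1, ha2⟩ := ha
    show IsTreeAutFun ⇑a⁻¹
    have hlen : ∀ v : Vertex, (a⁻¹ v).length = v.length := by
      intro v
      have h := ha1 (a⁻¹ v)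
      rw [(show ∀ x, a (a⁻¹ x) = x from fun x => Equiv.apply_symm_apply a x)] at h
      exact h.symm ▸ rfl
    refine ⟨hlen, fun v w => ?_⟩
    have htl : ((a⁻¹ (v ++ w)).take v.length).length = v.length := by
      rw [List.length_take, hlen, List.length_append]
      omega
    have key : a ((a⁻¹ (v ++ w)).take v.length) = v := by
      have h2 := ha2 ((a⁻¹ (v ++ w)).take v.length) ((a⁻¹ (v ++ w)).drop v.length)
      rw [List.take_append_drop, htl, (show ∀ x, a (a⁻¹ x) = x from fun x => Equiv.apply_symm_apply a x)] at h2
      rw [← h2]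
      simpa using List.take_left (l₁ := v) (l₂ := w)
    have h3 := congrArg (⇑a⁻¹) key
    rwa [(show ∀ x, a⁻¹ (a x) = x from fun x => Equiv.symm_apply_apply a x)] at h3

/-- wreath recursion, forward map: `(g,h)σᵗ` -/
def wrFun (g h : Vertex → Vertex) (t : Bool) : Vertex → Vertex
  | [] => []
  | x :: v => (xor x t) :: (cond x (h v) (g v))

/-- wreath recursion, inverse map -/
def wrFunInv (g h : Vertex → Vertex) (t : Bool) : Vertex → Vertex
  | [] => []
  | y :: w => (xor y t) :: (cond (xor y t) (h w) (g w))

/-- `(g,h)σᵗ` as a permutation of the vertices. -/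
def wrPerm (g h : Equiv.Perm Vertex) (t : Bool) : Equiv.Perm Vertex where
  toFun := wrFun ⇑g ⇑h t
  invFun := wrFunInv ⇑g.symm ⇑h.symm t
  left_inv := by
    intro v
    cases v with
    | nil => rfl
    | cons x v => cases x <;> cases t <;> simp [wrFun, wrFunInv]
  right_inv := by
    intro v
    cases v with
    | nil => rfl
    | cons x v => cases x <;> cases t <;> simp [wrFun, wrFunInv]

/-- The element `(g,h)σᵗ` of `Ω`: acts on the first level by `σᵗ` (where `σ` is the
swap of the two level-one subtrees), with section `g` at the vertex `0` and section
`h` at the vertex `1`.  Thus `(γ₀,γ₁)τ` of the wreath recursion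
`Ω ≃ (Ω × Ω) ⋊ S₂` is `wr γ₀ γ₁ t` (`t = true` iff `τ = σ`). -/
def wr (g h : TreeAut) (t : Bool) : TreeAut :=
  ⟨wrPerm g.1 h.1 t, by
    have hg : IsTreeAutFun ⇑g.1 := g.2
    have hh : IsTreeAutFun ⇑h.1 := h.2
    constructor
    · intro v
      cases v with
      | nil => rfl
      | cons x v =>
        cases x <;> simp [wrPerm, wrFun, hg.1, hh.1]
    · intro v w
      cases v with
      | nil => simp [wrPerm, wrFun]
      | cons x v =>
        cases x <;> simp [wrPerm, wrFun, hg.2, hh.2]⟩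

/-- Application of a tree automorphism to a vertex. -/
def ap (γ : TreeAut) (v : Vertex) : Vertex := γ.1 v

/-- The permutation induced by `γ ∈ Ω` on level `n` of the tree. -/
def levelPerm (n : ℕ) (γ : TreeAut) : Equiv.Perm (List.Vector Bool n) where
  toFun v := ⟨γ.1 v.1, by
    have h : IsTreeAutFun ⇑γ.1 := γ.2
    rw [h.1 v.1]; exact v.2⟩
  invFun v := ⟨γ.1.symm v.1, by
    have h : IsTreeAutFun ⇑γ.1 := γ.2
    have h2 := h.1 (γ.1.symm v.1)
    rw [Equiv.apply_symm_apply] at h2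
    exact h2.symm.trans v.2⟩
  left_inv v := Subtype.ext (Equiv.symm_apply_apply _ _)
  right_inv v := Subtype.ext (Equiv.apply_symm_apply _ _)

/-- Restriction to level `n` as a group homomorphism. -/
def levelHom (n : ℕ) : TreeAut →* Equiv.Perm (List.Vector Bool n) where
  toFun := levelPerm n
  map_one' := Equiv.ext fun v => Subtype.ext rfl
  map_mul' := fun g h => Equiv.ext fun v => Subtype.ext rfl

/-- `sgn_n`: the sign of the permutation induced on level `n`. -/
def sgn (n : ℕ) (γ : TreeAut) : ℤˣ := Equiv.Perm.sign (levelPerm n γ)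

/-- An odometer: acts as a single `2^n`-cycle on each level `n ≥ 1`. -/
def IsOdometer (γ : TreeAut) : Prop :=
  ∀ n : ℕ, 1 ≤ n → (levelPerm n γ).IsCycle ∧ (levelPerm n γ).support = Finset.univ

/-- The profinite topology on `Ω`: the coarsest topology making all level
restrictions (to the discrete finite groups) continuous. -/
instance : TopologicalSpace TreeAut :=
  ⨅ n : ℕ, TopologicalSpace.induced (levelPerm n) ⊥

/-- A vertex `w` is in a stable cycle of `γ` of length `k`: its `γ`-orbit has exactly
`k` elements, and for every level `m` above the level of `w`, all level-`m` vertices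
lying above this orbit are in one single `γ`-cycle (necessarily of length
`2^(m - n) * k`, which we record via the periodicity condition). -/
def InStableCycle (γ : TreeAut) (w : Vertex) (k : ℕ) : Prop :=
  0 < k ∧ ap (γ ^ k) w = w ∧ (∀ j : ℕ, 0 < j → j < k → ap (γ ^ j) w ≠ w) ∧
  (∀ u : Vertex, w.length < u.length → (∃ i : ℕ, u.take w.length = ap (γ ^ i) w) →
    (ap (γ ^ (2 ^ (u.length - w.length) * k)) u = u ∧
      ∀ u' : Vertex, u'.length = u.length →
        (∃ i : ℕ, u'.take w.length = ap (γ ^ i) w) → ∃ j : ℕ, ap (γ ^ j) u = u'))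

/-- Self-similar subgroup: closed under taking sections (here the section of `γ` at
the first-level vertex `x` is characterized by `(xv)γ = (x)γ ⬝ (v)γₓ`). -/
def SelfSimilar (H : Subgroup TreeAut) : Prop :=
  ∀ γ ∈ H, ∀ x : Bool, ∀ δ : TreeAut,
    (∀ v : Vertex, ap γ (x :: v) = ap γ [x] ++ ap δ v) → δ ∈ H

lemma ap_length (γ : TreeAut) (v : Vertex) : (ap γ v).length = v.length := γ.2.1 v

lemma ap_append_take (γ : TreeAut) (u v : Vertex) : (ap γ (u ++ v)).take u.length = ap γ u :=
  γ.2.2 u v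

lemma ap_inv_ap (γ : TreeAut) (v : Vertex) : ap γ⁻¹ (ap γ v) = v := γ.1.symm_apply_apply v

lemma ap_ap_inv (γ : TreeAut) (v : Vertex) : ap γ (ap γ⁻¹ v) = v := γ.1.apply_symm_apply v

lemma ap_injective (γ : TreeAut) : Function.Injective (ap γ) := γ.1.injective

lemma TreeAut.ext {γ δ : TreeAut} (h : ∀ v, ap γ v = ap δ v) : γ = δ :=
  Subtype.ext (Equiv.ext h)

lemma ap_wr_cons (g h : TreeAut) (t x : Bool) (v : Vertex) :
    ap (wr g h t) (x :: v) = xor x t :: cond x (ap h v) (ap g v) := rfl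

lemma wr_mul (g h g' h' : TreeAut) (t t' : Bool) :
    wr g h t * wr g' h' t' = wr (cond t' h g * g') (cond t' g h * h') (xor t t') := by
  refine TreeAut.ext fun v => ?_
  rcases v with _ | ⟨x, v⟩
  · rfl
  · cases x <;> cases t <;> cases t' <;> rfl

lemma wr_one : wr 1 1 false = 1 := by
  refine TreeAut.ext fun v => ?_
  rcases v with _ | ⟨x, v⟩
  · rfl
  · cases x <;> rfl

lemma wr_inv (g h : TreeAut) (t : Bool) :
    (wr g h t)⁻¹ = wr (cond t h⁻¹ g⁻¹) (cond t g⁻¹ h⁻¹) t := by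
  refine inv_eq_of_mul_eq_one_right ?_
  cases t <;> simp [wr_mul, wr_one]

/-- `(g, h) ↦ (g, h)`: the isomorphism of `Ω × Ω` onto the stabilizer of the first level. -/
def wrHom : TreeAut × TreeAut →* TreeAut where
  toFun p := wr p.1 p.2 false
  map_one' := wr_one
  map_mul' p q := by simp [wr_mul]

lemma wr_false_zpow (g h : TreeAut) (i : ℤ) : wr g h false ^ i = wr (g ^ i) (h ^ i) false :=
  (map_zpow wrHom (g, h) i).symm

lemma wr_true_sq (g h : TreeAut) : wr g h true ^ 2 = wr (h * g) (g * h) false := by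
  rw [sq, wr_mul]
  rfl

lemma wr_conj (g h x : TreeAut) :
    wr g h true * wr x 1 true * (wr g h true)⁻¹ = wr (g * h⁻¹) (h * x * g⁻¹) true := by
  simp [wr_inv, wr_mul]

lemma ap_append_eq_append_drop (γ : TreeAut) (u v : Vertex) :
    ap γ (u ++ v) = ap γ u ++ (ap γ (u ++ v)).drop u.length := by
  conv_lhs => rw [← List.take_append_drop u.length (ap γ (u ++ v)), ap_append_take]

def secPerm (γ : TreeAut) (u : Vertex) : Equiv.Perm Vertex where
  toFun v := (ap γ (u ++ v)).drop u.length
  invFun w := (ap γ⁻¹ (ap γ u ++ w)).drop u.length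
  left_inv v := by
    simp only [← ap_append_eq_append_drop, ap_inv_ap, List.drop_left]
  right_inv w := by
    have h : ap γ⁻¹ (ap γ u ++ w) = u ++ (ap γ⁻¹ (ap γ u ++ w)).drop u.length := by
      conv_lhs => rw [ap_append_eq_append_drop γ⁻¹ (ap γ u) w, ap_inv_ap, ap_length]
    change (ap γ (u ++ _)).drop u.length = w
    rw [← h, ap_ap_inv, ← ap_length γ u, List.drop_left]

lemma secPerm_mem (γ : TreeAut) (u : Vertex) : secPerm γ u ∈ TreeAut := by
  refine ⟨fun v => ?_, fun v w => ?_⟩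
  · simp [secPerm, ap_length]
  · simp only [secPerm, Equiv.coe_fn_mk, List.take_drop]
    rw [← List.append_assoc, ← List.length_append, ap_append_take]

/-- The section `γ|ᵤ` of `γ` at the vertex `u`: `(u ++ v)γ = (u)γ ++ (v)γ|ᵤ`. -/
def sec (γ : TreeAut) (u : Vertex) : TreeAut := ⟨secPerm γ u, secPerm_mem γ u⟩

lemma ap_append (γ : TreeAut) (u v : Vertex) : ap γ (u ++ v) = ap γ u ++ ap (sec γ u) v :=
  ap_append_eq_append_drop γ u v

lemma exists_eq_wr (γ : TreeAut) : ∃ g h t, γ = wr g h t := by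
  obtain ⟨y, hy⟩ := List.length_eq_one_iff.1 (ap_length γ [false])
  obtain ⟨z, hz⟩ := List.length_eq_one_iff.1 (ap_length γ [true])
  have hzy : z = !y := by
    have : z ≠ y := fun h => by
      have := ap_injective γ (hz.trans (h ▸ hy.symm))
      simp at this
    cases y <;> cases z <;> simp_all
  refine ⟨sec γ [false], sec γ [true], y, TreeAut.ext fun v => ?_⟩
  rcases v with _ | ⟨_ | _, v⟩
  · exact List.length_eq_zero_iff.1 (ap_length γ [])
  · rw [ap_wr_cons, ← List.singleton_append, ap_append, hy]
    simp
  · rw [ap_wr_cons, ← List.singleton_append, ap_append, hz, hzy]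
    simp

lemma levelPerm_eq_of_le {m n : ℕ} (hmn : m ≤ n) {γ δ : TreeAut}
    (h : levelPerm n γ = levelPerm n δ) : levelPerm m γ = levelPerm m δ := by
  refine Equiv.ext fun v => Subtype.ext ?_
  let u : List.Vector Bool n := ⟨v.1 ++ List.replicate (n - m) false, by simp [v.2]; omega⟩
  have hu : ap γ u.1 = ap δ u.1 := congrArg Subtype.val (Equiv.congr_fun h u)
  change ap γ v.1 = ap δ v.1
  rw [← ap_append_take γ v.1 (List.replicate (n - m) false),
    ← ap_append_take δ v.1 (List.replicate (n - m) false)]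
  exact congrArg (List.take _) hu

open Filter Topology in
lemma hasBasis_nhds (γ : TreeAut) :
    (𝓝 γ).HasBasis (fun _ : ℕ => True) fun n => {δ | levelPerm n δ = levelPerm n γ} := by
  have h : 𝓝 γ = ⨅ n : ℕ, 𝓟 {δ | levelPerm n δ = levelPerm n γ} := by
    refine nhds_iInf.trans (iInf_congr fun n => ?_)
    let : TopologicalSpace (Equiv.Perm (List.Vector Bool n)) := ⊥
    have : DiscreteTopology (Equiv.Perm (List.Vector Bool n)) := ⟨rfl⟩
    rw [nhds_induced, nhds_discrete, Filter.comap_pure]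
    rfl
  rw [h]
  exact Filter.hasBasis_iInf_principal fun m n =>
    ⟨max m n, fun _ hδ => levelPerm_eq_of_le (le_max_left m n) hδ,
      fun _ hδ => levelPerm_eq_of_le (le_max_right m n) hδ⟩

lemma mem_closure_iff_levelPerm {S : Set TreeAut} {γ : TreeAut} :
    γ ∈ closure S ↔ ∀ n, ∃ δ ∈ S, levelPerm n δ = levelPerm n γ := by
  simpa using mem_closure_iff_nhds_basis (hasBasis_nhds γ)

lemma levelPerm_wr_cons {n : ℕ} (g h : TreeAut) (t x : Bool) (v : List.Vector Bool n) :
    levelPerm (n + 1) (wr g h t) (x ::ᵥ v) = xor x t ::ᵥ levelPerm n (cond x h g) v := by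
  cases x <;> rfl

lemma levelPerm_eq_of_levelPerm_wr_eq {n : ℕ} {g h g' h' : TreeAut} {t t' : Bool}
    (heq : levelPerm (n + 1) (wr g h t) = levelPerm (n + 1) (wr g' h' t')) :
    levelPerm n g = levelPerm n g' ∧ levelPerm n h = levelPerm n h' := by
  have key (x : Bool) : levelPerm n (cond x h g) = levelPerm n (cond x h' g') :=
    Equiv.ext fun v => by
      simpa [levelPerm_wr_cons] using congrArg List.Vector.tail (Equiv.congr_fun heq (x ::ᵥ v))
  exact ⟨key false, key true⟩

/-- `(H × H) ⋊ S₂` inside `Ω`; `H ≤ wreath H` says that `H` is self-similar. -/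
def wreath (H : Subgroup TreeAut) : Subgroup TreeAut where
  carrier := {u | ∃ g ∈ H, ∃ h ∈ H, ∃ t, wr g h t = u}
  one_mem' := ⟨1, H.one_mem, 1, H.one_mem, false, wr_one⟩
  mul_mem' := by
    rintro _ _ ⟨g, hg, h, hh, t, rfl⟩ ⟨g', hg', h', hh', t', rfl⟩
    refine ⟨_, ?_, _, ?_, _, (wr_mul g h g' h' t t').symm⟩ <;>
      cases t' <;> exact H.mul_mem ‹_› ‹_›
  inv_mem' := by
    rintro _ ⟨g, hg, h, hh, t, rfl⟩
    refine ⟨_, ?_, _, ?_, _, (wr_inv g h t).symm⟩ <;> cases t <;> exact H.inv_mem ‹_›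

lemma wr_mem_wreath {H : Subgroup TreeAut} {g h : TreeAut} (hg : g ∈ H) (hh : h ∈ H) (t : Bool) :
    wr g h t ∈ wreath H :=
  ⟨g, hg, h, hh, t, rfl⟩

lemma sections_mem_closure_of_le_wreath {H : Subgroup TreeAut} (hH : H ≤ wreath H)
    {g h : TreeAut} {t : Bool} (hgh : wr g h t ∈ closure (H : Set TreeAut)) :
    g ∈ closure (H : Set TreeAut) ∧ h ∈ closure (H : Set TreeAut) := by
  have happrox (n : ℕ) :
      ∃ g' ∈ H, ∃ h' ∈ H, levelPerm n g' = levelPerm n g ∧ levelPerm n h' = levelPerm n h := by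
    obtain ⟨_, hu, heq⟩ := mem_closure_iff_levelPerm.1 hgh (n + 1)
    obtain ⟨g', hg', h', hh', t', rfl⟩ := hH hu
    exact ⟨g', hg', h', hh', levelPerm_eq_of_levelPerm_wr_eq heq⟩
  simp only [mem_closure_iff_levelPerm]
  constructor <;> intro n <;> obtain ⟨g', hg', h', hh', hgg', hhh'⟩ := happrox n
  exacts [⟨g', hg', hgg'⟩, ⟨h', hh', hhh'⟩]

lemma sgn_mul (n : ℕ) (γ δ : TreeAut) : sgn n (γ * δ) = sgn n γ * sgn n δ :=
  map_mul (Equiv.Perm.sign.comp (levelHom n)) γ δ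

lemma sgn_inv (n : ℕ) (γ : TreeAut) : sgn n γ⁻¹ = sgn n γ :=
  (map_inv (Equiv.Perm.sign.comp (levelHom n)) γ).trans (Int.units_inv_eq_self _)

def vectorConsEquiv (n : ℕ) : List.Vector Bool (n + 1) ≃ Bool × List.Vector Bool n where
  toFun v := (v.head, v.tail)
  invFun p := p.1 ::ᵥ p.2
  left_inv v := v.cons_head_tail
  right_inv p := by simp

lemma sgn_wr {n : ℕ} (hn : 1 ≤ n) (g h : TreeAut) (t : Bool) :
    sgn (n + 1) (wr g h t) = sgn n g * sgn n h := by
  classical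
  let σ : Equiv.Perm Bool := if t then Equiv.swap false true else 1
  let q : Equiv.Perm (Bool × List.Vector Bool n) :=
    Equiv.prodCongrLeft (fun _ => σ) * Equiv.prodCongrRight fun x => levelPerm n (cond x h g)
  have hq (v : List.Vector Bool (n + 1)) :
      vectorConsEquiv n (levelPerm (n + 1) (wr g h t) v) = q (vectorConsEquiv n v) := by
    rw [← v.cons_head_tail, levelPerm_wr_cons]
    cases v.head <;> cases t <;> simp [vectorConsEquiv, q, σ]
  -- the swap `σ` acts on `2 ^ n` copies of level `n`, an even number
  have hσ : ∏ _v : List.Vector Bool n, Equiv.Perm.sign σ = 1 := by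
    obtain ⟨k, hk⟩ : Even (Fintype.card (List.Vector Bool n)) := by
      rw [card_vector, Fintype.card_bool]
      exact Nat.even_pow.2 ⟨even_two, by omega⟩
    rw [Finset.prod_const, Finset.card_univ, hk, ← two_mul, pow_mul, Int.units_sq, one_pow]
  rw [sgn, Equiv.Perm.sign_eq_sign_of_equiv _ q _ hq, map_mul, Equiv.Perm.sign_prodCongrLeft, hσ,
    one_mul, Equiv.Perm.sign_prodCongrRight, Fintype.prod_bool, mul_comm]
  rfl

lemma IsOdometer.sgn_eq_neg_one {γ : TreeAut} (hγ : IsOdometer γ) {n : ℕ} (hn : 1 ≤ n) :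
    sgn n γ = -1 := by
  obtain ⟨hcycle, hsupp⟩ := hγ n hn
  rw [sgn, hcycle.sign, hsupp, Finset.card_univ, card_vector, Fintype.card_bool,
    (Nat.even_pow.2 ⟨even_two, by omega⟩).neg_one_pow]

lemma levelPerm_one_wr_false (g h : TreeAut) : levelPerm 1 (wr g h false) = 1 :=
  Equiv.ext fun v => by
    rw [← v.cons_head_tail, levelPerm_wr_cons, Bool.xor_false,
      Subsingleton.elim (levelPerm 0 _ v.tail) v.tail]
    rfl

lemma exists_eq_wr_true_of_sgn_one {γ : TreeAut} (hγ : sgn 1 γ = -1) :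
    ∃ g h, γ = wr g h true := by
  obtain ⟨g, h, _ | _, rfl⟩ := exists_eq_wr γ
  · rw [sgn, levelPerm_one_wr_false, map_one] at hγ
    exact absurd hγ (by decide)
  · exact ⟨g, h, rfl⟩

lemma sameCycle_wr_false_cons_false {g : TreeAut} (h : TreeAut) {v w : Vertex}
    (hvw : g.1.SameCycle v w) : (wr g h false).1.SameCycle (false :: v) (false :: w) := by
  obtain ⟨i, rfl⟩ := hvw
  refine ⟨i, ?_⟩
  rw [← Subgroup.coe_zpow, wr_false_zpow, ← Subgroup.coe_zpow]
  rfl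

lemma sameCycle_of_sgn {γ : TreeAut} (hγ : ∀ n, 1 ≤ n → sgn n γ = -1) {v w : Vertex}
    (hvw : v.length = w.length) : γ.1.SameCycle v w := by
  induction v generalizing γ w with
  | nil => rw [List.length_eq_zero_iff.1 hvw.symm]
  | cons x v ih =>
    obtain ⟨g, h, rfl⟩ := exists_eq_wr_true_of_sgn_one (hγ 1 le_rfl)
    -- `h * g` is the section of `γ ^ 2` at `0`, and its signs are those of `γ` one level down
    have hhg (n : ℕ) (hn : 1 ≤ n) : sgn n (h * g) = -1 := by
      rw [sgn_mul, mul_comm, ← sgn_wr hn]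
      exact hγ (n + 1) (by omega)
    have hfalse (u : Vertex) (hu : v.length = u.length) :
        (wr g h true).1.SameCycle (false :: v) (false :: u) := by
      have := sameCycle_wr_false_cons_false (g * h) (ih hhg hu)
      rw [← wr_true_sq, Subgroup.coe_pow] at this
      exact this.of_pow
    have hcons (y : Bool) (u : Vertex) (hu : v.length = u.length) :
        (wr g h true).1.SameCycle (false :: v) (y :: u) := by
      cases y
      · exact hfalse u hu
      · refine (hfalse (ap g⁻¹ u) (by rw [ap_length, hu])).trans ⟨1, ?_⟩
        rw [zpow_one]
        exact congrArg (true :: ·) (ap_ap_inv g u)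
    obtain ⟨y, u, rfl⟩ := List.exists_cons_of_length_eq_add_one hvw.symm
    exact (hcons x v rfl).symm.trans (hcons y u (Nat.succ_injective hvw))

lemma isOdometer_of_sgn {γ : TreeAut} (hγ : ∀ n, 1 ≤ n → sgn n γ = -1) : IsOdometer γ := by
  intro n hn
  let L : Set Vertex := {v | v.length = n}
  have hcycle : γ.1.IsCycleOn L :=
    ⟨γ.1.bijOn fun v => by
        change (ap γ v).length = n ↔ v.length = n
        rw [ap_length],
      fun v hv w hw => sameCycle_of_sgn hγ (hv.trans hw.symm)⟩
  have hL : L.Nontrivial := ⟨List.replicate n false, by simp [L], List.replicate n true, by simp [L],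
    by cases n <;> simp_all⟩
  refine ⟨hcycle.isCycle_subtypePerm hL, Finset.eq_univ_of_forall fun v => ?_⟩
  exact Equiv.Perm.mem_support.2 fun hv => hcycle.apply_ne hL v.2 (congrArg Subtype.val hv)

lemma isOdometer_mul_inv_of_isOdometer_wr {g h : TreeAut} {t : Bool} (hγ : IsOdometer (wr g h t)) :
    IsOdometer (g * h⁻¹) :=
  isOdometer_of_sgn fun n hn => by
    rw [sgn_mul, sgn_inv, ← sgn_wr hn g h t]
    exact hγ.sgn_eq_neg_one (by omega)

lemma closure_range_le_wreath (r s : ℕ) (hs1 : 1 < s) (hsr : s ≤ r)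
    (a : ZMod r → TreeAut)
    (ha1 : a 1 = wr (a (r : ZMod r)) 1 true)
    (hmid : ∀ i : ℕ, 2 ≤ i → i ≤ s - 1 → a (i : ZMod r) = wr 1 (a ((i - 1 : ℕ) : ZMod r)) false)
    (has : a (s : ZMod r) = wr 1 (a ((s - 1 : ℕ) : ZMod r)) true)
    (hhi : ∀ i : ℕ, s + 1 ≤ i → i ≤ r → a (i : ZMod r) = wr (a ((i - 1 : ℕ) : ZMod r)) 1 false) :
    Subgroup.closure (Set.range a) ≤ wreath (Subgroup.closure (Set.range a)) := by
  have : NeZero r := ⟨by omega⟩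
  set H := Subgroup.closure (Set.range a)
  have haH (j : ZMod r) : a j ∈ H := Subgroup.subset_closure ⟨j, rfl⟩
  refine (Subgroup.closure_le _).2 (Set.range_subset_iff.2 fun j => ?_)
  obtain ⟨i, hi1, hir, rfl⟩ : ∃ i : ℕ, 1 ≤ i ∧ i ≤ r ∧ (i : ZMod r) = j :=
    ⟨(j - 1).val + 1, by omega, (j - 1).val_lt, by push_cast [ZMod.natCast_zmod_val]; ring⟩
  rcases (by omega : i = 1 ∨ (2 ≤ i ∧ i ≤ s - 1) ∨ i = s ∨ s + 1 ≤ i)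
    with rfl | ⟨hi2, his⟩ | rfl | hsi
  · rw [Nat.cast_one, ha1]
    exact wr_mem_wreath (haH _) H.one_mem true
  · rw [hmid i hi2 his]
    exact wr_mem_wreath H.one_mem (haH _) false
  · rw [has]
    exact wr_mem_wreath H.one_mem (haH _) true
  · rw [hhi i hsi hir]
    exact wr_mem_wreath (haH _) H.one_mem false

theorem normalizer_no_odometer_general
    (r s : ℕ) (hs1 : 1 < s) (hsr : s ≤ r)
    (a : ZMod r → TreeAut)
    (ha1 : a 1 = wr (a (r : ZMod r)) 1 true)
    (hmid : ∀ i : ℕ, 2 ≤ i → i ≤ s - 1 → a (i : ZMod r) = wr 1 (a ((i - 1 : ℕ) : ZMod r)) false)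
    (has : a (s : ZMod r) = wr 1 (a ((s - 1 : ℕ) : ZMod r)) true)
    (hhi : ∀ i : ℕ, s + 1 ≤ i → i ≤ r → a (i : ZMod r) = wr (a ((i - 1 : ℕ) : ZMod r)) 1 false)
    (hno : ∀ γ ∈ closure ((Subgroup.closure (Set.range a) : Subgroup TreeAut) : Set TreeAut),
      ¬ IsOdometer γ) :
    ∀ γ : TreeAut,
      (∀ g : TreeAut,
        g ∈ closure ((Subgroup.closure (Set.range a) : Subgroup TreeAut) : Set TreeAut) ↔
        γ * g * γ⁻¹ ∈
          closure ((Subgroup.closure (Set.range a) : Subgroup TreeAut) : Set TreeAut)) →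
      ¬ IsOdometer γ := by
  intro γ hnorm hγ
  obtain ⟨γ₀, γ₁, rfl⟩ := exists_eq_wr_true_of_sgn_one (hγ.sgn_eq_neg_one le_rfl)
  have hconj := (hnorm (a 1)).1 (subset_closure (Subgroup.subset_closure ⟨1, rfl⟩))
  rw [ha1, wr_conj] at hconj
  have hself := closure_range_le_wreath r s hs1 hsr a ha1 hmid has hhi
  exact hno _ (sections_mem_closure_of_le_wreath hself hconj).1
    (isOdometer_mul_inv_of_isOdometer_wr hγ)

/-- if G = ⟨⟨a₁,…,a_r⟩⟩ contains no odometer, then neither does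
its normalizer in Ω. -/
theorem normalizer_no_odometer
    (r s : ℕ) (hr : 3 ≤ r) (hs1 : 1 < s) (hsr : s ≤ r)
    (a : ZMod r → TreeAut)
    (ha1 : a 1 = wr (a (r : ZMod r)) 1 true)
    (hmid : ∀ i : ℕ, 2 ≤ i → i ≤ s - 1 → a (i : ZMod r) = wr 1 (a ((i - 1 : ℕ) : ZMod r)) false)
    (has : a (s : ZMod r) = wr 1 (a ((s - 1 : ℕ) : ZMod r)) true)
    (hhi : ∀ i : ℕ, s + 1 ≤ i → i ≤ r → a (i : ZMod r) = wr (a ((i - 1 : ℕ) : ZMod r)) 1 false)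
    (hno : ∀ γ ∈ closure ((Subgroup.closure (Set.range a) : Subgroup TreeAut) : Set TreeAut),
      ¬ IsOdometer γ) :
    ∀ γ : TreeAut,
      (∀ g : TreeAut,
        g ∈ closure ((Subgroup.closure (Set.range a) : Subgroup TreeAut) : Set TreeAut) ↔
        γ * g * γ⁻¹ ∈
          closure ((Subgroup.closure (Set.range a) : Subgroup TreeAut) : Set TreeAut)) →
      ¬ IsOdometer γ :=
  normalizer_no_odometer_general r s hs1 hsr a ha1 hmid has hhi hno

end BinTree
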